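/- Let F be a field of characteristic zero, let X be an n-element set, let Y = {y_1,...,y_m} be an m-element set, and let w_1,...,w_m be indeterminates; set W(f) = ∏_{x∈X} w_{f(x)} for f : X → Y and w̃ = (∑_{i=1}^m w_i, ∑_{i=1}^m w_i^2, ..., ∑_{i=1}^m w_i^n). For a permutation σ of X, let F_σ = {f : X → Y : f(x^σ) = f(x) for every x ∈ X} be the set of functions constant on each cycle of σ. Then ∑_{f∈F_σ} W(f) = Z(σ, w̃) in F[w_1,...,w_m]. -/

import Mathlib

open Finset

open scoped Classical

noncomputable section

/-- `cycleCount σ i` is the number of cycles of length `i` in the cycle decomposition of the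
permutation `σ` (fixed points are counted as cycles of length `1`). -/
def cycleCount {X : Type*} [Fintype X] [DecidableEq X] (σ : Equiv.Perm X) (i : ℕ) : ℕ :=
  if i = 1 then Fintype.card X - σ.support.card else σ.cycleType.count i

/-- `Zmon n σ t = t₁^{c₁(σ)} ⋯ t_n^{c_n(σ)}`, the monomial of the cycle index polynomial
associated to `σ`, evaluated at `t = (t₁, …, t_n)`. -/
def Zmon {X : Type*} [Fintype X] [DecidableEq X] {R : Type*} [CommSemiring R] (n : ℕ)
    (σ : Equiv.Perm X) (t : Fin n → R) : R :=
  ∏ i : Fin n, t i ^ cycleCount σ (i.1 + 1)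

/-!
A function `f` with `f ∘ σ = f` is the same as a function on the set of cycles of `σ`
(the classes of `σ.SameCycle`, fixed points included), and `∏ₓ w_{f x}` becomes
`∏_c w_{f c}^{|c|}`. Summing over all such functions therefore factorises as
`∏_c (∑ᵢ w_i^{|c|})`, and grouping the cycles by length gives `Z(σ, w̃)`. The only work is to
match the cycle lengths with Mathlib's `cycleType`: a class of size `≥ 2` is the support of a
cycle factor `σ.cycleOf x`, and a class of size `1` is a fixed point.
-/

namespace Setoid

variable {X : Type*} [Fintype X] (s : Setoid X)

def classCard (q : Quotient s) : ℕ := #{x | ⟦x⟧ = q}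

theorem sum_prod_comp_mk {Y R : Type*} [Fintype Y] [CommSemiring R] (w : Y → R) :
    ∑ g : Quotient s → Y, ∏ x, w (g ⟦x⟧) = ∏ q, ∑ y, w y ^ s.classCard q := by
  rw [Fintype.prod_sum]
  refine Fintype.sum_congr _ _ fun g => ?_
  rw [← prod_fiberwise' univ (Quotient.mk s) (fun q => w (g q))]
  simp only [prod_const, classCard]

theorem classCard_mem_Icc (q : Quotient s) : s.classCard q ∈ Icc 1 (Fintype.card X) := by
  induction q using Quotient.inductionOn with
  | h x => exact mem_Icc.mpr ⟨card_pos.mpr ⟨x, by simp⟩, card_le_univ _⟩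

theorem prod_comp_classCard {M : Type*} [CommMonoid M] (t : ℕ → M) :
    ∏ q : Quotient s, t (s.classCard q) =
      ∏ i : Fin (Fintype.card X), t (i + 1) ^ #{q | s.classCard q = i + 1} := by
  have hmaps : ∀ q ∈ (univ : Finset (Quotient s)), s.classCard q ∈ Icc 1 (Fintype.card X) :=
    fun q _ => s.classCard_mem_Icc q
  rw [← prod_fiberwise_of_maps_to' hmaps, Fin.prod_univ_eq_prod_range
    (fun i => t (i + 1) ^ #{q | s.classCard q = i + 1}), range_eq_Ico,
    prod_Ico_add' (fun k => t k ^ #{q | s.classCard q = k}), zero_add,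
    Ico_add_one_right_eq_Icc]
  exact prod_congr rfl fun k _ => prod_const _

end Setoid

namespace Equiv.Perm

variable {X : Type*}

theorem apply_eq_of_sameCycle [Finite X] {Y : Type*} {σ : Perm X} {f : X → Y}
    (hf : ∀ x, f (σ x) = f x) {x y : X} (h : σ.SameCycle x y) : f x = f y := by
  obtain ⟨i, -, rfl⟩ := h.exists_nat_pow_eq
  rw [coe_pow, ← Function.comp_apply (f := f), Function.iterate_invariant (funext hf)]

variable [Fintype X]

theorem classCard_mk_sameCycle_of_apply_eq {σ : Perm X} {x : X} (hx : σ x = x) :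
    (SameCycle.setoid σ).classCard ⟦x⟧ = 1 := by
  rw [Setoid.classCard, card_eq_one]
  refine ⟨x, Finset.ext fun y => ?_⟩
  simp only [mem_filter, mem_univ, true_and, mem_singleton, Quotient.eq]
  exact ⟨fun h => (h.symm.eq_of_left hx).symm, fun h => h ▸ SameCycle.rfl⟩

variable [DecidableEq X] (σ : Perm X)

theorem filter_invariant_eq_map_comp_mk (Y : Type*) [Fintype Y]
    [DecidablePred fun f : X → Y => ∀ x, f (σ x) = f x] :
    univ.filter (fun f : X → Y => ∀ x, f (σ x) = f x) =
      univ.map ⟨(· ∘ Quotient.mk (SameCycle.setoid σ)),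
        Quotient.mk_surjective.injective_comp_right⟩ := by
  ext f
  simp only [mem_filter, mem_univ, true_and, mem_map, Function.Embedding.coeFn_mk]
  constructor
  · intro hf
    exact ⟨Quotient.lift f fun x y => apply_eq_of_sameCycle hf, rfl⟩
  · rintro ⟨g, -, rfl⟩ x
    exact congrArg g (Quotient.sound (sameCycle_apply_left.mpr (SameCycle.refl σ x)))

theorem count_cycleType (k : ℕ) :
    σ.cycleType.count k = #{c ∈ σ.cycleFactorsFinset | #c.support = k} := by
  rw [cycleType_def, Multiset.count_map, card_def, filter_val]
  simp only [Function.comp_apply, eq_comm]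

variable {σ} {x : X}

theorem classCard_mk_sameCycle_of_mem_support (hx : x ∈ σ.support) :
    (SameCycle.setoid σ).classCard ⟦x⟧ = #(σ.cycleOf x).support := by
  rw [Setoid.classCard]
  congr 1
  ext y
  simp only [mem_filter, mem_univ, true_and, Quotient.eq,
    mem_support_cycleOf_iff' (mem_support.mp hx)]
  exact sameCycle_comm

theorem classCard_mk_sameCycle_eq_one_iff :
    (SameCycle.setoid σ).classCard ⟦x⟧ = 1 ↔ σ x = x := by
  refine ⟨fun h => ?_, classCard_mk_sameCycle_of_apply_eq⟩
  by_contra hx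
  rw [classCard_mk_sameCycle_of_mem_support (mem_support.mpr hx)] at h
  have := two_le_card_support_cycleOf_iff.mpr hx
  omega

variable (σ)

theorem card_filter_classCard_eq_one :
    #{q | (SameCycle.setoid σ).classCard q = 1} = Fintype.card X - #σ.support := by
  rw [← card_compl]
  symm
  refine card_nbij (Quotient.mk _) (fun x hx => ?_) (fun x hx y _ hxy => ?_) fun q hq => ?_
  · simpa [classCard_mk_sameCycle_eq_one_iff] using hx
  · simp only [coe_compl, Set.mem_compl_iff, mem_coe, notMem_support] at hx
    exact (Quotient.exact hxy).eq_of_left hx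
  · obtain ⟨x, rfl⟩ := Quotient.mk_surjective q
    refine ⟨x, ?_, rfl⟩
    simpa [classCard_mk_sameCycle_eq_one_iff] using hq

theorem card_filter_classCard_eq_count_cycleType {k : ℕ} (hk : k ≠ 1) :
    #{q | (SameCycle.setoid σ).classCard q = k} = σ.cycleType.count k := by
  have mem_support_of_classCard {x : X} (hx : (SameCycle.setoid σ).classCard ⟦x⟧ = k) :
      x ∈ σ.support :=
    mem_support.mpr fun hfix => hk (hx.symm.trans (classCard_mk_sameCycle_of_apply_eq hfix))
  rw [count_cycleType]
  refine card_nbij (Quotient.lift σ.cycleOf fun _ _ => SameCycle.cycleOf_eq) ?_ ?_ ?_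
  · intro q hq
    obtain ⟨x, rfl⟩ := Quotient.mk_surjective q
    rw [mem_coe, mem_filter] at hq ⊢
    have hx := mem_support_of_classCard hq.2
    exact ⟨cycleOf_mem_cycleFactorsFinset_iff.mpr hx,
      (classCard_mk_sameCycle_of_mem_support hx).symm.trans hq.2⟩
  · intro q hq q' hq' h
    obtain ⟨x, rfl⟩ := Quotient.mk_surjective q
    obtain ⟨y, rfl⟩ := Quotient.mk_surjective q'
    rw [mem_coe, mem_filter] at hq hq'
    exact Quotient.sound ((sameCycle_iff_cycleOf_eq_of_mem_support
      (mem_support_of_classCard hq.2) (mem_support_of_classCard hq'.2)).mpr h)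
  · intro c hc
    rw [mem_coe, mem_filter] at hc
    obtain ⟨x, hx⟩ := (mem_cycleFactorsFinset_iff.mp hc.1).1.nonempty_support
    have hc_eq : c = σ.cycleOf x := cycle_is_cycleOf hx hc.1
    refine ⟨⟦x⟧, ?_, hc_eq.symm⟩
    rw [mem_coe, mem_filter, classCard_mk_sameCycle_of_mem_support
      (mem_cycleFactorsFinset_support_le hc.1 hx), ← hc_eq]
    exact ⟨mem_univ _, hc.2⟩

theorem card_filter_classCard_eq_cycleCount (k : ℕ) :
    #{q | (SameCycle.setoid σ).classCard q = k} = cycleCount σ k := by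
  rw [cycleCount]
  split_ifs with hk
  · rw [hk, card_filter_classCard_eq_one]
  · exact card_filter_classCard_eq_count_cycleType σ hk

end Equiv.Perm

theorem sum_weights_fixed_functions_general {F : Type*} [Field F] (n m : ℕ)
    (X : Type*) [Fintype X] [DecidableEq X] (hX : Fintype.card X = n)
    (σ : Equiv.Perm X) :
    ∑ f ∈ univ.filter (fun f : X → Fin m => ∀ x : X, f (σ x) = f x),
        ∏ x, (MvPolynomial.X (f x) : MvPolynomial (Fin m) F)
      = Zmon n σ
          (fun j => ∑ i : Fin m, (MvPolynomial.X i : MvPolynomial (Fin m) F) ^ (j.1 + 1)) := by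
  subst hX
  rw [σ.filter_invariant_eq_map_comp_mk, sum_map]
  simp only [Function.Embedding.coeFn_mk, Function.comp_apply]
  rw [Setoid.sum_prod_comp_mk, Setoid.prod_comp_classCard _ fun k => ∑ i, MvPolynomial.X i ^ k,
    Zmon]
  simp only [σ.card_filter_classCard_eq_cycleCount]

/-- **Key lemma.** For a permutation `σ` of an `n`-element set `X`, the sum of the weights
`W(f) = ∏_{x ∈ X} w_{f(x)}` over all functions `f : X → Y` that are constant on each cycle
of `σ` (i.e. `f(x^σ) = f(x)` for all `x`) equals `Z(σ, w̃)`. -/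
theorem sum_weights_fixed_functions {F : Type*} [Field F] [CharZero F] (n m : ℕ)
    (X : Type*) [Fintype X] [DecidableEq X] (hX : Fintype.card X = n)
    (σ : Equiv.Perm X) :
    ∑ f ∈ univ.filter (fun f : X → Fin m => ∀ x : X, f (σ x) = f x),
        ∏ x, (MvPolynomial.X (f x) : MvPolynomial (Fin m) F)
      = Zmon n σ
          (fun j => ∑ i : Fin m, (MvPolynomial.X i : MvPolynomial (Fin m) F) ^ (j.1 + 1)) :=
  sum_weights_fixed_functions_general n m X hX σ
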